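/- For any graph G with no isolated vertex, ∂_{2p}(G) ≤ ρ(G)·(δ(G) - 1) + 2m(G) - n(G)·δ(G), where m(G) is the number of edges and n(G) the number of vertices; moreover equality holds if and only if there exists a maximum 2-packing S such that every vertex outside S has degree δ(G). -/

import Mathlib

open Finset

variable {V : Type*}

/-- `S` is a 2-packing: closed neighbourhoods of distinct vertices of `S` are disjoint. -/
def IsPacking2 (G : SimpleGraph V) (S : Finset V) : Prop :=
  (S : Set V).Pairwise fun u v =>
    Disjoint (G.neighborSet u ∪ {u}) (G.neighborSet v ∪ {v})

/-- The external neighbourhood of `S`: vertices outside `S` with a neighbour in `S`. -/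
def extN (G : SimpleGraph V) [Fintype V] [DecidableEq V] [DecidableRel G.Adj]
    (S : Finset V) : Finset V :=
  Finset.univ.filter fun v => v ∉ S ∧ ∃ u ∈ S, G.Adj u v

/-- The differential of a set `S`: `|N_e(S)| - |S|`. -/
def diffSet (G : SimpleGraph V) [Fintype V] [DecidableEq V] [DecidableRel G.Adj]
    (S : Finset V) : ℤ :=
  ((extN G S).card : ℤ) - S.card

/-- The 2-packing differential of `G`. -/
noncomputable def pdiff2 (G : SimpleGraph V) [Fintype V] [DecidableEq V]
    [DecidableRel G.Adj] : ℤ :=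
  sSup {d : ℤ | ∃ S : Finset V, IsPacking2 G S ∧ d = diffSet G S}

/-- The packing number of `G`: maximum cardinality of a 2-packing. -/
noncomputable def packNum (G : SimpleGraph V) [Fintype V] : ℕ :=
  sSup {n : ℕ | ∃ S : Finset V, IsPacking2 G S ∧ n = S.card}

/-- `G` has no isolated vertex. -/
def NoIsolated (G : SimpleGraph V) : Prop := ∀ v : V, ∃ u, G.Adj v u

/-- `S` is a dominating set of `G`. -/
def IsDom (G : SimpleGraph V) (S : Finset V) : Prop :=
  ∀ v, v ∉ S → ∃ u ∈ S, G.Adj u v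

/-
For a 2-packing `S` the external neighbourhood is the disjoint union of the open neighbourhoods
of its vertices, so `|N_e(S)| - |S| = ∑_{u ∈ S} (deg u - 1)`. Splitting `2m = ∑_v deg v` over
`S` and its complement gives the identity
`ρ(δ - 1) + 2m - nδ = (|N_e(S)| - |S|) + (ρ - |S|)(δ - 1) + ∑_{v ∉ S} (deg v - δ)`,
whose last two terms are nonnegative when `δ ≥ 1`. Equality therefore forces both to vanish for
a 2-packing realising `∂_{2p}`. When `δ ≥ 2` that packing is maximum; when `δ = 1` every vertex
outside it is a leaf. Then, for a maximum 2-packing `T`, every `t ∈ T` whose closed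
neighbourhood meets some `N[s]`, `s ∈ S`, lies in `N[s]`, so there are at most `|S|` such `t`,
and adding the remaining ones to `S` gives a maximum 2-packing.
-/

open SimpleGraph

lemma isPacking2_empty (G : SimpleGraph V) : IsPacking2 G (∅ : Finset V) := by
  simp [IsPacking2]

section Packing

variable [Fintype V] (G : SimpleGraph V)

lemma packNum_set_bddAbove :
    BddAbove {n : ℕ | ∃ S : Finset V, IsPacking2 G S ∧ n = S.card} := by
  refine ⟨Fintype.card V, ?_⟩
  rintro _ ⟨S, -, rfl⟩
  exact card_le_univ S

lemma exists_isPacking2_card_eq_packNum :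
    ∃ S : Finset V, IsPacking2 G S ∧ #S = packNum G := by
  obtain ⟨S, hS, h⟩ := Nat.sSup_mem (s := {n | ∃ S : Finset V, IsPacking2 G S ∧ n = #S})
    ⟨0, ∅, isPacking2_empty G, rfl⟩ (packNum_set_bddAbove G)
  exact ⟨S, hS, h.symm⟩

lemma packNum_le_card : packNum G ≤ Fintype.card V := by
  obtain ⟨S, -, hS⟩ := exists_isPacking2_card_eq_packNum G
  exact hS ▸ card_le_univ S

variable {G}

lemma IsPacking2.card_le_packNum {S : Finset V} (hS : IsPacking2 G S) : #S ≤ packNum G :=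
  le_csSup (packNum_set_bddAbove G) ⟨S, hS, rfl⟩

variable [DecidableEq V] [DecidableRel G.Adj] {S : Finset V} {u v : V}

def closedNbhd (G : SimpleGraph V) [DecidableRel G.Adj] (v : V) : Finset V :=
  insert v (G.neighborFinset v)

lemma mem_closedNbhd : u ∈ closedNbhd G v ↔ u = v ∨ G.Adj v u := by
  simp [closedNbhd]

lemma mem_closedNbhd_comm : u ∈ closedNbhd G v ↔ v ∈ closedNbhd G u := by
  simp only [mem_closedNbhd, eq_comm, G.adj_comm]

lemma isPacking2_iff :
    IsPacking2 G S ↔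
      (S : Set V).Pairwise fun u v => Disjoint (closedNbhd G u) (closedNbhd G v) := by
  refine forall₂_congr fun u _ => forall₂_congr fun v _ => forall_congr' fun _ => ?_
  show Disjoint _ _ ↔ Disjoint _ _
  rw [← disjoint_coe]
  simp [closedNbhd]

lemma IsPacking2.disjoint_closedNbhd (hS : IsPacking2 G S) (hu : u ∈ S) (hv : v ∈ S)
    (huv : u ≠ v) : Disjoint (closedNbhd G u) (closedNbhd G v) :=
  isPacking2_iff.1 hS hu hv huv

lemma IsPacking2.notMem_of_adj (hS : IsPacking2 G S) (hu : u ∈ S) (hadj : G.Adj u v) :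
    v ∉ S := fun hv =>
  disjoint_left.1 (hS.disjoint_closedNbhd hu hv (G.ne_of_adj hadj))
    (mem_closedNbhd.2 (Or.inr hadj)) (mem_closedNbhd.2 (Or.inl rfl))

lemma IsPacking2.extN_eq_biUnion (hS : IsPacking2 G S) :
    extN G S = S.biUnion fun u => G.neighborFinset u := by
  ext v
  simp only [extN, mem_filter, mem_univ, true_and, mem_biUnion, mem_neighborFinset]
  exact ⟨fun ⟨_, hv⟩ => hv, fun ⟨u, hu, hadj⟩ => ⟨hS.notMem_of_adj hu hadj, u, hu, hadj⟩⟩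

lemma IsPacking2.diffSet_eq (hS : IsPacking2 G S) :
    diffSet G S = ∑ u ∈ S, ((G.degree u : ℤ) - 1) := by
  have hcard : #(extN G S) = ∑ u ∈ S, G.degree u := by
    rw [hS.extN_eq_biUnion, card_biUnion]
    · rfl
    · exact fun u hu v hv huv => (hS.disjoint_closedNbhd hu hv huv).mono
        (subset_insert _ _) (subset_insert _ _)
  rw [diffSet, hcard, sum_sub_distrib, sum_const, nsmul_one]
  push_cast
  rfl

variable (G) in
lemma pdiff2_set_finite :
    {d : ℤ | ∃ S : Finset V, IsPacking2 G S ∧ d = diffSet G S}.Finite :=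
  (Set.finite_range (diffSet G)).subset fun _ ⟨S, _, hd⟩ => ⟨S, hd.symm⟩

lemma IsPacking2.diffSet_le_pdiff2 (hS : IsPacking2 G S) : diffSet G S ≤ pdiff2 G :=
  le_csSup (pdiff2_set_finite G).bddAbove ⟨S, hS, rfl⟩

variable (G) in
lemma exists_isPacking2_diffSet_eq_pdiff2 :
    ∃ S : Finset V, IsPacking2 G S ∧ diffSet G S = pdiff2 G := by
  obtain ⟨S, hS, h⟩ := Set.Nonempty.csSup_mem
    (s := {d : ℤ | ∃ S : Finset V, IsPacking2 G S ∧ d = diffSet G S})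
    ⟨_, ∅, isPacking2_empty G, rfl⟩ (pdiff2_set_finite G)
  exact ⟨S, hS, h.symm⟩

lemma IsPacking2.mem_closedNbhd_of_not_disjoint (hS : IsPacking2 G S)
    (hleaf : ∀ v ∉ S, G.degree v ≤ 1) {s t : V} (hs : s ∈ S)
    (h : ¬Disjoint (closedNbhd G t) (closedNbhd G s)) : t ∈ closedNbhd G s := by
  obtain ⟨x, hxt, hxs⟩ := not_disjoint_iff.1 h
  rcases mem_closedNbhd.1 hxt with rfl | htx
  · exact hxs
  rcases mem_closedNbhd.1 hxs with rfl | hsx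
  · exact mem_closedNbhd.2 (Or.inr htx.symm)
  have hx : #(G.neighborFinset x) ≤ 1 := by
    rw [card_neighborFinset_eq_degree]
    exact hleaf x (hS.notMem_of_adj hs hsx)
  have : t = s := card_le_one.1 hx t ((mem_neighborFinset _ _ _).2 htx.symm) s
    ((mem_neighborFinset _ _ _).2 hsx.symm)
  exact this ▸ mem_closedNbhd.2 (Or.inl rfl)

lemma IsPacking2.exists_superset_card_eq_packNum (hS : IsPacking2 G S)
    (hleaf : ∀ v ∉ S, G.degree v ≤ 1) :
    ∃ S', IsPacking2 G S' ∧ S ⊆ S' ∧ #S' = packNum G := by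
  obtain ⟨T, hT, hTcard⟩ := exists_isPacking2_card_eq_packNum G
  set near := T.filter fun t => ∃ s ∈ S, t ∈ closedNbhd G s
  set far := T.filter fun t => ¬∃ s ∈ S, t ∈ closedNbhd G s
  have hfar : ∀ t ∈ far, ∀ s ∈ S, Disjoint (closedNbhd G t) (closedNbhd G s) := fun t ht s hs =>
    not_not.1 fun h => (mem_filter.1 ht).2 ⟨s, hs, hS.mem_closedNbhd_of_not_disjoint hleaf hs h⟩
  have hpacking : IsPacking2 G (S ∪ far) := by
    refine isPacking2_iff.2 fun u hu v hv huv => ?_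
    simp only [coe_union, Set.mem_union, mem_coe] at hu hv
    rcases hu with hu | hu <;> rcases hv with hv | hv
    · exact hS.disjoint_closedNbhd hu hv huv
    · exact (hfar v hv u hu).symm
    · exact hfar u hu v hv
    · exact hT.disjoint_closedNbhd (mem_filter.1 hu).1 (mem_filter.1 hv).1 huv
  -- `s` would lie in the closed neighbourhoods of two vertices of `T`
  have hnear : #near ≤ #S := card_le_card_of_forall_subsingleton (fun t s => t ∈ closedNbhd G s)
    (fun t ht => (mem_filter.1 ht).2)
    fun s _ t₁ ht₁ t₂ ht₂ => by_contra fun hne => disjoint_left.1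
      (hT.disjoint_closedNbhd (mem_filter.1 ht₁.1).1 (mem_filter.1 ht₂.1).1 hne)
      (mem_closedNbhd_comm.1 ht₁.2) (mem_closedNbhd_comm.1 ht₂.2)
  have hdisj : Disjoint S far := disjoint_right.2 fun t ht htS =>
    (mem_filter.1 ht).2 ⟨t, htS, mem_closedNbhd.2 (Or.inl rfl)⟩
  refine ⟨S ∪ far, hpacking, subset_union_left, le_antisymm hpacking.card_le_packNum ?_⟩
  rw [← hTcard, card_union_of_disjoint hdisj,
    ← card_filter_add_card_filter_not (s := T) fun t => ∃ s ∈ S, t ∈ closedNbhd G s]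
  exact Nat.add_le_add_right hnear _

end Packing

section Bound

variable [Fintype V] {G : SimpleGraph V} [DecidableRel G.Adj]

noncomputable def diffBound (G : SimpleGraph V) [DecidableRel G.Adj] : ℤ :=
  (packNum G : ℤ) * ((G.minDegree : ℤ) - 1)
    + 2 * G.edgeFinset.card - (Fintype.card V : ℤ) * G.minDegree

lemma one_le_minDegree [Nonempty V] (h : NoIsolated G) : 1 ≤ G.minDegree :=
  G.le_minDegree_of_forall_le_degree 1 fun v => (G.degree_pos_iff_exists_adj v).2 (h v)

variable {S : Finset V}

lemma IsPacking2.packNum_gap_nonneg (h : NoIsolated G) (hS : IsPacking2 G S) :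
    0 ≤ ((packNum G : ℤ) - #S) * ((G.minDegree : ℤ) - 1) := by
  have hS' : (#S : ℤ) ≤ packNum G := by exact_mod_cast hS.card_le_packNum
  cases isEmpty_or_nonempty V
  · have hρ : packNum G = 0 := by simpa using packNum_le_card G
    simp [hρ, S.eq_empty_of_isEmpty]
  · have : (1 : ℤ) ≤ G.minDegree := by exact_mod_cast one_le_minDegree h
    nlinarith

variable [DecidableEq V]

lemma IsPacking2.diffBound_eq (hS : IsPacking2 G S) :
    diffBound G = diffSet G S + ((packNum G : ℤ) - #S) * ((G.minDegree : ℤ) - 1)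
      + ∑ v ∈ Sᶜ, ((G.degree v : ℤ) - G.minDegree) := by
  have hsum : ∑ u ∈ S, (G.degree u : ℤ) + ∑ v ∈ Sᶜ, (G.degree v : ℤ) = 2 * #G.edgeFinset := by
    rw [sum_add_sum_compl]
    exact_mod_cast G.sum_degrees_eq_twice_card_edges
  have hcompl : (#Sᶜ : ℤ) = Fintype.card V - #S := by
    rw [card_compl, Nat.cast_sub (card_le_univ S)]
  rw [diffBound, hS.diffSet_eq]
  simp only [sum_sub_distrib, sum_const, nsmul_eq_mul, hcompl]
  linarith

lemma IsPacking2.diffSet_eq_diffBound_iff (h : NoIsolated G) (hS : IsPacking2 G S) :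
    diffSet G S = diffBound G ↔ ((packNum G : ℤ) - #S) * ((G.minDegree : ℤ) - 1) = 0 ∧
      ∀ v ∉ S, G.degree v = G.minDegree := by
  have hdeg : ∀ v ∈ Sᶜ, 0 ≤ (G.degree v : ℤ) - G.minDegree := fun v _ => by
    simpa using G.minDegree_le_degree v
  have hdeg_iff : (∑ v ∈ Sᶜ, ((G.degree v : ℤ) - G.minDegree) = 0) ↔
      ∀ v ∉ S, G.degree v = G.minDegree := by
    rw [sum_eq_zero_iff_of_nonneg hdeg]
    simp [sub_eq_zero]
  rw [hS.diffBound_eq, ← hdeg_iff]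
  have := hS.packNum_gap_nonneg h
  have := sum_nonneg hdeg
  constructor
  · intro h; constructor <;> linarith
  · rintro ⟨h₁, h₂⟩; linarith

lemma IsPacking2.diffSet_le_diffBound (h : NoIsolated G) (hS : IsPacking2 G S) :
    diffSet G S ≤ diffBound G := by
  rw [hS.diffBound_eq]
  linarith [hS.packNum_gap_nonneg h, sum_nonneg fun v (_ : v ∈ Sᶜ) =>
    sub_nonneg.2 (Int.ofNat_le.2 (G.minDegree_le_degree v))]

end Bound

theorem stmt7 {V : Type*} [Fintype V] [DecidableEq V] (G : SimpleGraph V)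
    [DecidableRel G.Adj] (h : NoIsolated G) :
    pdiff2 G ≤ (packNum G : ℤ) * ((G.minDegree : ℤ) - 1)
        + 2 * G.edgeFinset.card - (Fintype.card V : ℤ) * G.minDegree ∧
      (pdiff2 G = (packNum G : ℤ) * ((G.minDegree : ℤ) - 1)
          + 2 * G.edgeFinset.card - (Fintype.card V : ℤ) * G.minDegree ↔
        ∃ S : Finset V, IsPacking2 G S ∧ S.card = packNum G ∧
          ∀ v, v ∉ S → G.degree v = G.minDegree) := by
  change pdiff2 G ≤ diffBound G ∧ (pdiff2 G = diffBound G ↔ _)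
  obtain ⟨S, hS, hSd⟩ := exists_isPacking2_diffSet_eq_pdiff2 G
  have hle : pdiff2 G ≤ diffBound G := hSd ▸ hS.diffSet_le_diffBound h
  refine ⟨hle, fun heq => ?_, ?_⟩
  · obtain ⟨hgap, hdeg⟩ := (hS.diffSet_eq_diffBound_iff h).1 (hSd.trans heq)
    rcases mul_eq_zero.1 hgap with hcard | hδ
    · exact ⟨S, hS, by omega, hdeg⟩
    · obtain ⟨S', hS', hSS', hcard'⟩ :=
        hS.exists_superset_card_eq_packNum fun v hv => (hdeg v hv).trans_le (by omega)
      exact ⟨S', hS', hcard', fun v hv => hdeg v fun hvS => hv (hSS' hvS)⟩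
  · rintro ⟨S, hS, hcard, hdeg⟩
    have hSd := (hS.diffSet_eq_diffBound_iff h).2 ⟨by simp [hcard], hdeg⟩
    exact hle.antisymm (hSd ▸ hS.diffSet_le_pdiff2)
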